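/- arXiv:2211.01150 — 2 statements merged into one kernel-verified Lean document; each statement's English description precedes it below -/
import Mathlib

section
/- Consider n patients with the same treatment protocol (same number of fractions F and allowed machines), ordered so that their day limits satisfy d_{L,1} ≤ d_{L,2} ≤ ... ≤ d_{L,n}. If there exists a feasible schedule assigning start days s_1, ..., s_n, then there exists a feasible schedule with the same multiset of start days where s_1 ≤ s_2 ≤ ... ≤ s_n, obtained by sorting; moreover the sorted schedule has total weighted target-violation cost Σ_i c·max(0, s_i − d_{L,i}) no larger than the original. -/
/-- Exchange inequality for the hinge cost. -/
lemma exch_max (a b p q : ℝ) (hab : a ≤ b) (hpq : p ≤ q) :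
    max 0 (a - p) + max 0 (b - q) ≤ max 0 (b - p) + max 0 (a - q) := by
  rcases le_or_gt (b - q) 0 with h1 | h1
  · have h2 : max 0 (b - q) = 0 := max_eq_left h1
    rw [h2, add_zero]
    have : max 0 (a - p) ≤ max 0 (b - p) := max_le_max le_rfl (by linarith)
    have : (0:ℝ) ≤ max 0 (a - q) := le_max_left _ _
    linarith
  · have h2 : max 0 (b - q) = b - q := max_eq_right h1.le
    rcases le_or_gt (a - p) 0 with h3 | h3
    · have h4 : max 0 (a - p) = 0 := max_eq_left h3
      have h5 : b - q ≤ b - p := by linarith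
      have h6 : b - p ≤ max 0 (b - p) := le_max_right _ _
      have h7 : (0:ℝ) ≤ max 0 (a - q) := le_max_left _ _
      linarith
    · have h4 : max 0 (a - p) = a - p := max_eq_right h3.le
      have h5 : max 0 (b - p) = b - p := max_eq_right (by linarith)
      have h6 : a - q ≤ max 0 (a - q) := le_max_right _ _
      linarith

/-- Rearrangement: pairing monotone `t` with monotone `d` in order minimizes
the total hinge cost over all permutations. -/
lemma key_rearrange {n : ℕ} (t d : Fin n → ℝ) (ht : Monotone t) (hd : Monotone d)
    (π : Equiv.Perm (Fin n)) :
    ∑ i, max 0 (t i - d i) ≤ ∑ i, max 0 (t (π i) - d i) := by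
  have H : ∀ m : ℕ, ∀ π : Equiv.Perm (Fin n), π.support.card ≤ m →
      ∑ i, max 0 (t i - d i) ≤ ∑ i, max 0 (t (π i) - d i) := by
    intro m
    induction m with
    | zero =>
      intro π hπ
      have hπ1 : π = 1 := by
        rw [← Equiv.Perm.support_eq_empty_iff, ← Finset.card_eq_zero]; omega
      simp [hπ1]
    | succ m IH =>
      intro π hπ
      rcases Finset.eq_empty_or_nonempty π.support with hemp | hne
      · have hπ1 : π = 1 := Equiv.Perm.support_eq_empty_iff.mp hemp
        simp [hπ1]
      set k := π.support.max' hne with hk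
      have hkmem : k ∈ π.support := π.support.max'_mem hne
      set j := π⁻¹ k with hj
      have hjmem : j ∈ π.support := by
        rw [hj, Equiv.Perm.inv_eq_iff_eq] at *
        exact (Equiv.Perm.apply_mem_support (f := π) (x := π⁻¹ k)).mp
          (by rw [show π (π⁻¹ k) = k from Equiv.apply_symm_apply π k]; exact hkmem)
      have hπj : π j = k := Equiv.apply_symm_apply π k
      have hjk : j ≠ k := by
        intro h
        have : π k = k := by rw [← h, hπj, h]
        exact (Equiv.Perm.mem_support.mp hkmem) this
      have hjlek : j ≤ k := π.support.le_max' j hjmem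
      have hjltk : j < k := lt_of_le_of_ne hjlek hjk
      have hπk_ne : π k ≠ k := Equiv.Perm.mem_support.mp hkmem
      have hπk_mem : π k ∈ π.support := Equiv.Perm.apply_mem_support.mpr hkmem
      have hπk_le : π k ≤ k := π.support.le_max' _ hπk_mem
      set π' := π * Equiv.swap j k with hπ'
      have hπ'k : π' k = k := by
        simp [hπ', Equiv.swap_apply_right, hπj]
      have hπ'j : π' j = π k := by
        simp [hπ', Equiv.swap_apply_left]
      have hπ'other : ∀ i, i ≠ j → i ≠ k → π' i = π i := by
        intro i hij hik
        simp [hπ', Equiv.swap_apply_of_ne_of_ne hij hik]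
      -- support of π' is strictly smaller
      have hsub : π'.support ⊆ π.support := by
        intro x hx
        rw [Equiv.Perm.mem_support] at hx ⊢
        intro hfix
        rcases eq_or_ne x j with rfl | hxj
        · exact hjk (hπj.symm.trans hfix).symm
        · rcases eq_or_ne x k with rfl | hxk
          · exact hπk_ne hfix
          · rw [hπ'other x hxj hxk] at hx; exact hx hfix
      have hknot : k ∉ π'.support := by
        rw [Equiv.Perm.mem_support]; simpa using hπ'k
      have hssub : π'.support ⊂ π.support :=
        Finset.ssubset_iff_of_subset hsub |>.mpr ⟨k, hkmem, hknot⟩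
      have hcard' : π'.support.card < π.support.card :=
        Finset.card_lt_card hssub
      have hIH := IH π' (by omega)
      refine hIH.trans ?_
      -- compare the sums for π' and π
      have hjk' : j ≠ k := hjk
      have hsplit : ∀ ρ : Equiv.Perm (Fin n),
          ∑ i, max 0 (t (ρ i) - d i) =
          max 0 (t (ρ j) - d j) + max 0 (t (ρ k) - d k)
            + ∑ i ∈ (Finset.univ.erase j).erase k, max 0 (t (ρ i) - d i) := by
        intro ρ
        rw [← Finset.add_sum_erase _ _ (Finset.mem_univ j),
          ← Finset.add_sum_erase _ _ (Finset.mem_erase.mpr ⟨(Ne.symm hjk'), Finset.mem_univ k⟩)]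
        ring
      rw [hsplit π', hsplit π]
      have hrest : ∑ i ∈ (Finset.univ.erase j).erase k, max 0 (t (π' i) - d i)
          = ∑ i ∈ (Finset.univ.erase j).erase k, max 0 (t (π i) - d i) := by
        refine Finset.sum_congr rfl fun i hi => ?_
        rw [Finset.mem_erase, Finset.mem_erase] at hi
        rw [hπ'other i hi.2.1 hi.1]
      rw [hrest]
      have hexch := exch_max (t (π k)) (t k) (d j) (d k) (ht hπk_le) (hd hjltk.le)
      rw [hπ'j, hπ'k, hπj]
      linarith
  exact H _ π le_rfl

/-- Dominance/sorting: for `n` patients of the same protocol with nondecreasing day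
limits, any feasible schedule of start days can be permuted into a feasible schedule
with nondecreasing start days and no larger total weighted target-violation cost. -/
theorem stmt_4 (n : ℕ) (c : ℝ) (hc : 0 < c) (dL : Fin n → ℝ) (hdL : Monotone dL)
    (s : Fin n → ℝ) (Feasible : (Fin n → ℝ) → Prop)
    (hperm : ∀ σ : Equiv.Perm (Fin n), Feasible s → Feasible (s ∘ σ))
    (hs : Feasible s) :
    ∃ σ : Equiv.Perm (Fin n), Feasible (s ∘ σ) ∧ Monotone (s ∘ σ) ∧
      ∑ i, c * max 0 ((s ∘ σ) i - dL i) ≤ ∑ i, c * max 0 (s i - dL i) := by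
  refine ⟨Tuple.sort s, hperm _ hs, Tuple.monotone_sort s, ?_⟩
  set σ := Tuple.sort s
  have hmono : Monotone (s ∘ σ) := Tuple.monotone_sort s
  have hkey := key_rearrange (s ∘ σ) dL hmono hdL σ⁻¹
  have heq : ∀ i, (s ∘ σ) (σ⁻¹ i) = s i := fun i => by simp
  calc ∑ i, c * max 0 ((s ∘ σ) i - dL i)
      = c * ∑ i, max 0 ((s ∘ σ) i - dL i) := by rw [Finset.mul_sum]
    _ ≤ c * ∑ i, max 0 ((s ∘ σ) (σ⁻¹ i) - dL i) :=
        mul_le_mul_of_nonneg_left hkey hc.le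
    _ = ∑ i, c * max 0 (s i - dL i) := by
        rw [Finset.mul_sum]; exact Finset.sum_congr rfl fun i _ => by rw [heq]
end

section
/- For fixed sequences a, b of real numbers with a sorted nondecreasingly and any permutation σ, Σ_i max(0, a_{σ(i)} − b_i) is minimized over permutations σ when a_{σ(i)} is matched to b_i with both sorted nondecreasingly (assuming b is sorted nondecreasingly). -/
open Equiv Equiv.Perm Finset

private lemma key_exchange (x y u v : ℝ) (hxy : x ≤ y) (huv : u ≤ v) :
    max 0 (x - u) + max 0 (y - v) ≤ max 0 (x - v) + max 0 (y - u) := by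
  rcases le_total (x - u) 0 with h1 | h1 <;> rcases le_total (y - v) 0 with h2 | h2 <;>
    rcases le_total (x - v) 0 with h3 | h3 <;> rcases le_total (y - u) 0 with h4 | h4 <;>
    simp only [max_eq_left, max_eq_right, h1, h2, h3, h4] <;> linarith

private lemma aux_main {n : ℕ} (a b : Fin n → ℝ) (ha : Monotone a) (hb : Monotone b)
    (s : Finset (Fin n)) :
    ∀ {σ : Equiv.Perm (Fin n)}, {x | σ x ≠ x} ⊆ s →
      ∑ i ∈ s, max 0 (a i - b i) ≤ ∑ i ∈ s, max 0 (a (σ i) - b i) := by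
  classical
  induction s using Finset.induction_on_max with
  | empty => simp
  | insert j s hjmax hind =>
    intro σ hσ
    have hjs : j ∉ s := fun h => lt_irrefl j (hjmax j h)
    set τ : Equiv.Perm (Fin n) := σ.trans (swap j (σ j)) with hτ
    have hτs : {x | τ x ≠ x} ⊆ ↑s := by
      intro x hx
      simp only [τ, Ne, Set.mem_setOf_eq, Equiv.coe_trans, Equiv.swap_comp_apply] at hx
      split_ifs at hx with h₁ h₂
      · obtain rfl | hax := eq_or_ne x j
        · contradiction
        · exact Finset.mem_of_mem_insert_of_ne (hσ fun h ↦ hax <| h.symm.trans h₁) hax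
      · exact (hx <| σ.injective h₂.symm).elim
      · exact Finset.mem_of_mem_insert_of_ne (hσ hx) (ne_of_apply_ne _ h₂)
    specialize hind hτs
    simp_rw [sum_insert hjs]
    obtain hσj | hσj := eq_or_ne j (σ j)
    · rw [hτ, ← hσj, swap_self, trans_refl] at hind
      rw [← hσj]
      exact add_le_add_right hind _
    have h1s : σ⁻¹ j ∈ s := by
      rw [Ne, ← inv_eq_iff_eq] at hσj
      refine Finset.mem_of_mem_insert_of_ne ?_ hσj
      refine hσ fun h ↦ hσj ?_
      rwa [show σ (σ⁻¹ j) = j from σ.apply_symm_apply j, eq_comm] at h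
    have hss : ∑ i ∈ s, max 0 (a (τ i) - b i)
        = max 0 (a (σ j) - b (σ⁻¹ j)) + ∑ i ∈ s.erase (σ⁻¹ j), max 0 (a (σ i) - b i) := by
      rw [← s.sum_erase_add _ h1s, add_comm]
      congr 1
      · simp only [hτ, Equiv.coe_trans, Function.comp_apply, show σ (σ⁻¹ j) = j from σ.apply_symm_apply j, swap_apply_left]
      · refine Finset.sum_congr rfl fun x hx ↦ ?_
        rw [mem_erase, Ne, eq_inv_iff_eq] at hx
        simp only [hτ, Equiv.coe_trans, Function.comp_apply]
        rw [swap_apply_of_ne_of_ne hx.1 (σ.injective.ne ?_)]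
        rintro rfl
        exact hjs hx.2
    have hsσ : ∑ i ∈ s, max 0 (a (σ i) - b i)
        = max 0 (a j - b (σ⁻¹ j)) + ∑ i ∈ s.erase (σ⁻¹ j), max 0 (a (σ i) - b i) := by
      rw [← s.sum_erase_add _ h1s, add_comm, show σ (σ⁻¹ j) = j from σ.apply_symm_apply j]
    have hkey : max 0 (a j - b j) + max 0 (a (σ j) - b (σ⁻¹ j))
        ≤ max 0 (a (σ j) - b j) + max 0 (a j - b (σ⁻¹ j)) := by
      have h1 : σ j ∈ s := by
        refine Finset.mem_of_mem_insert_of_ne (hσ ?_) hσj.symm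
        exact σ.injective.ne hσj.symm
      have hσjle : a (σ j) ≤ a j := ha (hjmax _ h1).le
      have hble : b (σ⁻¹ j) ≤ b j := hb (hjmax _ h1s).le
      linarith [key_exchange (a (σ j)) (a j) (b (σ⁻¹ j)) (b j) hσjle hble]
    calc max 0 (a j - b j) + ∑ i ∈ s, max 0 (a i - b i)
        ≤ max 0 (a j - b j) + ∑ i ∈ s, max 0 (a (τ i) - b i) := by
          exact add_le_add_right hind _
      _ = max 0 (a j - b j) + max 0 (a (σ j) - b (σ⁻¹ j))
            + ∑ i ∈ s.erase (σ⁻¹ j), max 0 (a (σ i) - b i) := by rw [hss]; ring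
      _ ≤ max 0 (a (σ j) - b j) + max 0 (a j - b (σ⁻¹ j))
            + ∑ i ∈ s.erase (σ⁻¹ j), max 0 (a (σ i) - b i) := by
          exact add_le_add_left hkey _
      _ = max 0 (a (σ j) - b j) + ∑ i ∈ s, max 0 (a (σ i) - b i) := by rw [hsσ]; ring

/-- Rearrangement-type inequality for tardiness: with start days `a` and deadlines `b`
both sorted nondecreasingly, the identity matching minimizes the total tardiness
`∑ i max 0 (a (σ i) - b i)` over all permutations `σ`. -/
theorem stmt_5 (n : ℕ) (a b : Fin n → ℝ) (ha : Monotone a) (hb : Monotone b)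
    (σ : Equiv.Perm (Fin n)) :
    ∑ i, max 0 (a i - b i) ≤ ∑ i, max 0 (a (σ i) - b i) := by
  exact aux_main a b ha hb Finset.univ (fun x _ => Finset.mem_coe.mpr (Finset.mem_univ x))
end
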